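/- Let M > 0, let U : (0,∞) → ℝ be differentiable, define Ψ(L,R) = U(R) - M/R + L/(2R²), and let ω : ℝ² → ℝ be differentiable. Let O ⊆ (0,∞) × ℝ² be open and let E, L : O → ℝ be differentiable and satisfy, for every (R,y,z) ∈ O, the constraints ω(E(R,y,z), L(R,y,z)) = y and E(R,y,z) - Ψ(L(R,y,z), R) = z. Let r_• : ℝ → (0,∞) be differentiable and satisfy the critical point equation U'(r_ℓ) + M/r_ℓ² - L/r_ℓ³ |_{L=ℓ} = 0 (i.e. ∂_rΨ(ℓ, r_ℓ) = 0) for every ℓ in the range of L, and define ℰ(R,y,z) := E(R,y,z) - Ψ(L(R,y,z), r_{L(R,y,z)}). Then at every (R,y,z) ∈ O the quantity 𝒫ω := ∂_Eω/(2R²) + ∂_Lω, evaluated at (E(R,y,z), L(R,y,z)), satisfies 𝒫ω · ∂_y L(R,y,z) = 1 (in particular 𝒫ω ≠ 0), and ∂_y ℰ(R,y,z) = (1/(2·𝒫ω)) · (1/R² - 1/r_{L(R,y,z)}²). -/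

import Mathlib

/-!
Everything happens along the `y`-line `t ↦ (R, t, z)`, on which `R` and `z` are frozen.
Differentiating `E - Ψ(L, R) = z` there gives `∂_y E = ∂_y L / (2R²)`; inserting this into the
derivative of `ω(E, L) = y` gives `𝒫ω · ∂_y L = 1`. By the envelope theorem, the critical point
equation makes `ℓ ↦ Ψ(ℓ, r_ℓ)` have derivative `∂_ℓ Ψ = 1/(2 r_ℓ²)`, so
`∂_y ℰ = ∂_y L · (1/(2R²) - 1/(2 r_L²))`.
-/

open Filter Topology

noncomputable def effectivePotential (U : ℝ → ℝ) (M ℓ R : ℝ) : ℝ := U R - M / R + ℓ / (2 * R ^ 2)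

theorem hasDerivAt_effectivePotential_left (U : ℝ → ℝ) (M ℓ R : ℝ) :
    HasDerivAt (fun x => effectivePotential U M x R) (1 / (2 * R ^ 2)) ℓ :=
  (hasDerivAt_id' ℓ).div_const _ |>.const_add _

theorem hasDerivAt_effectivePotential_comp {U r : ℝ → ℝ} {M u r' ℓ : ℝ}
    (hU : HasDerivAt U u (r ℓ)) (hr : HasDerivAt r r' ℓ) (hr₀ : r ℓ ≠ 0) :
    HasDerivAt (fun x => effectivePotential U M x (r x))
      ((u + M / r ℓ ^ 2 - ℓ / r ℓ ^ 3) * r' + 1 / (2 * r ℓ ^ 2)) ℓ := by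
  have h : HasDerivAt (fun x => effectivePotential U M x (r x)) _ ℓ :=
    ((hU.comp ℓ hr).sub ((hasDerivAt_const ℓ M).div hr hr₀)).add
      ((hasDerivAt_id' ℓ).div ((hr.fun_pow 2).const_mul 2) (by simpa using hr₀))
  convert h using 1
  field_simp
  ring

theorem hasDerivAt_effectivePotential_comp_of_isCritical {U r : ℝ → ℝ} {M u r' ℓ : ℝ}
    (hU : HasDerivAt U u (r ℓ)) (hr : HasDerivAt r r' ℓ) (hr₀ : r ℓ ≠ 0)
    (hcrit : u + M / r ℓ ^ 2 - ℓ / r ℓ ^ 3 = 0) :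
    HasDerivAt (fun x => effectivePotential U M x (r x)) (1 / (2 * r ℓ ^ 2)) ℓ := by
  simpa [hcrit] using hasDerivAt_effectivePotential_comp (M := M) hU hr hr₀

theorem HasFDerivAt.hasDerivAt_yLine {F : Type*} [NormedAddCommGroup F] [NormedSpace ℝ F]
    {f : ℝ × ℝ × ℝ → F} {f' : ℝ × ℝ × ℝ →L[ℝ] F} {p : ℝ × ℝ × ℝ} (hf : HasFDerivAt f f' p) :
    HasDerivAt (fun y => f (p.1, y, p.2.2)) (f' (0, 1, 0)) p.2.1 :=
  hf.comp_hasDerivAt p.2.1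
    ((hasDerivAt_const _ _).prodMk ((hasDerivAt_id _).prodMk (hasDerivAt_const _ _)))

theorem IsOpen.eventually_yLine_mem {O : Set (ℝ × ℝ × ℝ)} (hO : IsOpen O) {p : ℝ × ℝ × ℝ}
    (hp : p ∈ O) : ∀ᶠ y in 𝓝 p.2.1, (p.1, y, p.2.2) ∈ O :=
  (Continuous.continuousAt (by fun_prop)).preimage_mem_nhds (hO.mem_nhds hp)

theorem fderiv_apply_mul_add_eq_one_of_eventually_eq_id {ω : ℝ × ℝ → ℝ} {e l : ℝ → ℝ}
    {a b y : ℝ} (hω : DifferentiableAt ℝ ω (e y, l y)) (he : HasDerivAt e a y)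
    (hl : HasDerivAt l b y) (hc : ∀ᶠ t in 𝓝 y, ω (e t, l t) = t) :
    fderiv ℝ ω (e y, l y) (1, 0) * a + fderiv ℝ ω (e y, l y) (0, 1) * b = 1 := by
  have h := (hω.hasFDerivAt.comp_hasDerivAt y (he.prodMk hl)).unique
    ((hasDerivAt_id' y).congr_of_eventuallyEq hc)
  have hab : ((a, b) : ℝ × ℝ) = a • (1, 0) + b • (0, 1) := by simp
  rwa [hab, map_add, map_smul, map_smul, smul_eq_mul, smul_eq_mul, mul_comm a, mul_comm b] at h

theorem HasDerivAt.eq_mul_of_eventually_sub_comp_eq {e l g : ℝ → ℝ} {a b c y z : ℝ}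
    (he : HasDerivAt e a y) (hl : HasDerivAt l b y) (hg : HasDerivAt g c (l y))
    (hc : ∀ᶠ t in 𝓝 y, e t - g (l t) = z) : a = c * b := by
  have h := (he.sub (hg.comp y hl)).unique ((hasDerivAt_const y z).congr_of_eventuallyEq hc)
  linarith

theorem dy_of_calE_general (M : ℝ) (U U' : ℝ → ℝ)
    (hU : ∀ r > 0, HasDerivAt U (U' r) r)
    (ω : ℝ × ℝ → ℝ) (hω : Differentiable ℝ ω)
    (O : Set (ℝ × ℝ × ℝ)) (hO : IsOpen O)
    (E L : ℝ × ℝ × ℝ → ℝ)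
    (hE : ∀ p ∈ O, DifferentiableAt ℝ E p) (hL : ∀ p ∈ O, DifferentiableAt ℝ L p)
    (hc₁ : ∀ p ∈ O, ω (E p, L p) = p.2.1)
    (hc₂ : ∀ p ∈ O, E p - (U p.1 - M / p.1 + L p / (2 * p.1 ^ 2)) = p.2.2)
    (r : ℝ → ℝ) (hrpos : ∀ ℓ : ℝ, 0 < r ℓ) (hrdiff : Differentiable ℝ r)
    (hcrit : ∀ p ∈ O, U' (r (L p)) + M / (r (L p)) ^ 2 - L p / (r (L p)) ^ 3 = 0) :
    ∀ p ∈ O,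
      (fderiv ℝ ω (E p, L p) (1, 0) / (2 * p.1 ^ 2) + fderiv ℝ ω (E p, L p) (0, 1)) *
          fderiv ℝ L p (0, 1, 0) = 1 ∧
      (fderiv ℝ ω (E p, L p) (1, 0) / (2 * p.1 ^ 2) + fderiv ℝ ω (E p, L p) (0, 1)) ≠ 0 ∧
      fderiv ℝ
          (fun q => E q - (U (r (L q)) - M / r (L q) + L q / (2 * (r (L q)) ^ 2))) p
          (0, 1, 0) =
        1 / (2 * (fderiv ℝ ω (E p, L p) (1, 0) / (2 * p.1 ^ 2) +
            fderiv ℝ ω (E p, L p) (0, 1))) * (1 / p.1 ^ 2 - 1 / (r (L p)) ^ 2) := by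
  intro p hp
  generalize hPdef : fderiv ℝ ω (E p, L p) (1, 0) / (2 * p.1 ^ 2) +
    fderiv ℝ ω (E p, L p) (0, 1) = P
  have hEy := (hE p hp).hasFDerivAt.hasDerivAt_yLine
  have hLy := (hL p hp).hasFDerivAt.hasDerivAt_yLine
  have hyO := hO.eventually_yLine_mem hp
  have hdyE : fderiv ℝ E p (0, 1, 0) = 1 / (2 * p.1 ^ 2) * fderiv ℝ L p (0, 1, 0) :=
    hEy.eq_mul_of_eventually_sub_comp_eq hLy (hasDerivAt_effectivePotential_left U M _ p.1)
      (hyO.mono fun _ => hc₂ _)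
  have hdyω : fderiv ℝ ω (E p, L p) (1, 0) * fderiv ℝ E p (0, 1, 0) +
      fderiv ℝ ω (E p, L p) (0, 1) * fderiv ℝ L p (0, 1, 0) = 1 :=
    fderiv_apply_mul_add_eq_one_of_eventually_eq_id (hω _) hEy hLy (hyO.mono fun _ => hc₁ _)
  have hP : P * fderiv ℝ L p (0, 1, 0) = 1 := by
    rw [hdyE] at hdyω
    rw [← hPdef]
    linear_combination hdyω
  have hΦ := hasDerivAt_effectivePotential_comp_of_isCritical (hU _ (hrpos _))
    (hrdiff (L p)).hasDerivAt (hrpos _).ne' (hcrit p hp)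
  have hℰ : HasFDerivAt (fun q => E q - effectivePotential U M (L q) (r (L q))) _ p :=
    (hE p hp).hasFDerivAt.sub (hΦ.comp_hasFDerivAt p (hL p hp).hasFDerivAt)
  simp only [effectivePotential] at hℰ
  refine ⟨hP, left_ne_zero_of_mul_eq_one hP, ?_⟩
  rw [hℰ.fderiv, sub_apply, smul_apply, smul_eq_mul,
    hdyE, eq_one_div_of_mul_eq_one_right hP]
  ring

/-- In the `(R,y,z)` coordinates with constraints `ω(E,L) = y` and
`E - Ψ(L,R) = z` (where `Ψ(L,R) = U(R) - M/R + L/(2R²)`), and with a differentiable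
family of critical radii `r_ℓ` satisfying `∂_rΨ(ℓ, r_ℓ) = 0`, the quantity
`𝒫ω = ∂_Eω/(2R²) + ∂_Lω` satisfies `𝒫ω · ∂_y L = 1` (so `𝒫ω ≠ 0`), and the function
`ℰ = E - Ψ(L, r_L)` satisfies `∂_y ℰ = (1/(2𝒫ω))·(1/R² - 1/r_L²)`. -/
theorem dy_of_calE (M : ℝ) (hM : 0 < M) (U U' : ℝ → ℝ)
    (hU : ∀ r > 0, HasDerivAt U (U' r) r)
    (ω : ℝ × ℝ → ℝ) (hω : Differentiable ℝ ω)
    (O : Set (ℝ × ℝ × ℝ)) (hO : IsOpen O) (hpos : ∀ p ∈ O, 0 < p.1)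
    (E L : ℝ × ℝ × ℝ → ℝ)
    (hE : ∀ p ∈ O, DifferentiableAt ℝ E p) (hL : ∀ p ∈ O, DifferentiableAt ℝ L p)
    (hc₁ : ∀ p ∈ O, ω (E p, L p) = p.2.1)
    (hc₂ : ∀ p ∈ O, E p - (U p.1 - M / p.1 + L p / (2 * p.1 ^ 2)) = p.2.2)
    (r : ℝ → ℝ) (hrpos : ∀ ℓ : ℝ, 0 < r ℓ) (hrdiff : Differentiable ℝ r)
    (hcrit : ∀ p ∈ O, U' (r (L p)) + M / (r (L p)) ^ 2 - L p / (r (L p)) ^ 3 = 0) :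
    ∀ p ∈ O,
      (fderiv ℝ ω (E p, L p) (1, 0) / (2 * p.1 ^ 2) + fderiv ℝ ω (E p, L p) (0, 1)) *
          fderiv ℝ L p (0, 1, 0) = 1 ∧
      (fderiv ℝ ω (E p, L p) (1, 0) / (2 * p.1 ^ 2) + fderiv ℝ ω (E p, L p) (0, 1)) ≠ 0 ∧
      fderiv ℝ
          (fun q => E q - (U (r (L q)) - M / r (L q) + L q / (2 * (r (L q)) ^ 2))) p
          (0, 1, 0) =
        1 / (2 * (fderiv ℝ ω (E p, L p) (1, 0) / (2 * p.1 ^ 2) +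
            fderiv ℝ ω (E p, L p) (0, 1))) * (1 / p.1 ^ 2 - 1 / (r (L p)) ^ 2) :=
  dy_of_calE_general M U U' hU ω hω O hO E L hE hL hc₁ hc₂ r hrpos hrdiff hcrit
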